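/- arXiv:0805.3403 — 5 statements merged into one kernel-verified Lean document; each statement's English description precedes it below -/
import Mathlib

section
/- For the discrete Laplacian on Z defined by (Δψ)(x) = ψ(x+1) - 2ψ(x) + ψ(x-1), the function ψ(x) = C e^{-k|x|} with C > 0 and k > 0 satisfies -ω ψ(x) = -Δψ(x) - δ_{0x}·a·ψ(0) for all x ∈ Z if and only if cosh k = (ω+2)/2 and sinh k = a/2 (in particular ω > 0 and a > 0). -/
/-- Characterization of the solitary waves with ω ∈ (0,∞) of the discrete
Schrödinger equation coupled to an oscillator at x = 0: the profile
ψ(x) = C e^{-k|x|} (C > 0, k > 0) satisfies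
-ω ψ(x) = -Δψ(x) - δ_{0x} a ψ(0) for all x ∈ ℤ iff
cosh k = (ω+2)/2 and sinh k = a/2 (in particular ω > 0 and a > 0). -/
theorem solitary_wave_char_pos (C ω a k : ℝ) (hC : 0 < C) (hk : 0 < k)
    (ψ : ℤ → ℝ) (hψ : ∀ x : ℤ, ψ x = C * Real.exp (-k * |(x : ℝ)|))  :
    (∀ x : ℤ, -(ω * ψ x) =
        -(ψ (x + 1) - 2 * ψ x + ψ (x - 1)) - (if x = 0 then (1:ℝ) else 0) * (a * ψ 0))
      ↔ (Real.cosh k = (ω + 2) / 2 ∧ Real.sinh k = a / 2 ∧ 0 < ω ∧ 0 < a) := by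
  have hE : Real.exp (-k) * Real.exp k = 1 := by rw [← Real.exp_add]; simp
  have he2 : Real.exp (-(k * 2)) = Real.exp (-k) * Real.exp (-k) := by
    rw [← Real.exp_add]; ring_nf
  have hEpos := Real.exp_pos (-k)
  have he1 : 1 < Real.exp k := by
    rw [show (1:ℝ) = Real.exp 0 by simp]; exact Real.exp_lt_exp.mpr hk
  have heneg : Real.exp (-k) < 1 := Real.exp_lt_one_iff.mpr (by linarith)
  constructor
  · intro h
    have h1 := h 1
    have h0 := h 0
    simp only [hψ] at h1 h0
    norm_num at h1 h0
    rw [he2] at h1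
    have hCE : (0:ℝ) < C * Real.exp (-k) := mul_pos hC hEpos
    have key : C * Real.exp (-k) * (ω - (Real.exp k + Real.exp (-k) - 2)) = 0 := by
      linear_combination -h1 - C * hE
    have hω : ω = Real.exp k + Real.exp (-k) - 2 := by
      rcases mul_eq_zero.mp key with h' | h'
      · exact absurd h' (ne_of_gt hCE)
      · linarith
    have ha : a = Real.exp k - Real.exp (-k) := by
      have : C * (a - (Real.exp k - Real.exp (-k))) = 0 := by
        linear_combination h0 + C * hω
      rcases mul_eq_zero.mp this with h' | h'
      · exact absurd h' (ne_of_gt hC)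
      · linarith
    refine ⟨?_, ?_, ?_, ?_⟩
    · rw [Real.cosh_eq]; rw [hω]; ring
    · rw [Real.sinh_eq, ha]
    · rw [hω]; nlinarith [sq_nonneg (Real.exp k - 1), hE, hEpos]
    · rw [ha]; linarith
  · rintro ⟨hcosh, hsinh, -, -⟩
    have hω : ω = Real.exp k + Real.exp (-k) - 2 := by
      rw [Real.cosh_eq] at hcosh; linarith
    have ha : a = Real.exp k - Real.exp (-k) := by
      rw [Real.sinh_eq] at hsinh; linarith
    intro x
    rcases lt_trichotomy x 0 with hx | hx | hx
    · -- x ≤ -1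
      have ht : ((x:ℝ)) ≤ -1 := by
        have : x ≤ -1 := by omega
        exact_mod_cast this
      have ha1 : |((x:ℝ))| = -(x:ℝ) := abs_of_neg (by linarith)
      have ha2 : |((x:ℝ) + 1)| = -((x:ℝ) + 1) := abs_of_nonpos (by linarith)
      have ha3 : |((x:ℝ) - 1)| = -((x:ℝ) - 1) := abs_of_neg (by linarith)
      have hx0 : x ≠ 0 := by omega
      rw [hψ x, hψ (x+1), hψ (x-1), if_neg hx0]
      push_cast
      rw [ha1, ha2, ha3]
      have e1 : Real.exp (-k * -((x:ℝ) + 1)) = Real.exp (-k * -(x:ℝ)) * Real.exp k := by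
        rw [← Real.exp_add]; ring_nf
      have e2 : Real.exp (-k * -((x:ℝ) - 1)) = Real.exp (-k * -(x:ℝ)) * Real.exp (-k) := by
        rw [← Real.exp_add]; ring_nf
      rw [e1, e2, hω]; ring
    · subst hx
      simp only [hψ, if_pos rfl]
      push_cast
      norm_num [Real.exp_zero]
      rw [hω, ha]; ring
    · have ht : (1:ℝ) ≤ (x:ℝ) := by exact_mod_cast hx
      have ha1 : |((x:ℝ))| = (x:ℝ) := abs_of_pos (by linarith)
      have ha2 : |((x:ℝ) + 1)| = (x:ℝ) + 1 := abs_of_pos (by linarith)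
      have ha3 : |((x:ℝ) - 1)| = (x:ℝ) - 1 := abs_of_nonneg (by linarith)
      have hx0 : x ≠ 0 := by omega
      rw [hψ x, hψ (x+1), hψ (x-1), if_neg hx0]
      push_cast
      rw [ha1, ha2, ha3]
      have e1 : Real.exp (-k * ((x:ℝ) + 1)) = Real.exp (-k * (x:ℝ)) * Real.exp (-k) := by
        rw [← Real.exp_add]; ring_nf
      have e2 : Real.exp (-k * ((x:ℝ) - 1)) = Real.exp (-k * (x:ℝ)) * Real.exp k := by
        rw [← Real.exp_add]; ring_nf
      rw [e1, e2, hω]; ring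
end

section
/- For the discrete Laplacian on Z, the function ψ(x) = C(-1)^{|x|} e^{-k|x|} with C > 0 and k > 0 satisfies -ω ψ(x) = -Δψ(x) - δ_{0x}·a·ψ(0) for all x ∈ Z if and only if cosh k = -(ω+2)/2 and sinh k = -a/2 (in particular ω < -4 and a < 0). -/
/-!
Writing `r = -exp (-k)`, the profile is `ψ x = C r^|x|`. Away from the origin the equation is the
three-term recurrence `ψ (x+1) + ψ (x-1) = (ω + 2) ψ x`, which a two-sided geometric profile
satisfies exactly when `ω + 2 = r + r⁻¹ = -2 cosh k`; at the origin both neighbours equal `C r`, and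
the equation becomes `a = r⁻¹ - r = -2 sinh k`. The sign conditions then follow from
`cosh k > 1` and `sinh k > 0` for `k > 0`.
-/

open Real

lemma pow_natAbs_add_one_add_pow_natAbs_sub_one {r : ℝ} (hr : r ≠ 0) {x : ℤ} (hx : x ≠ 0) :
    r ^ (x + 1).natAbs + r ^ (x - 1).natAbs = (r + r⁻¹) * r ^ x.natAbs := by
  obtain ⟨m, hm⟩ : ∃ m, x.natAbs = m + 1 := ⟨x.natAbs - 1, by omega⟩
  have hneighbours : ((x + 1).natAbs = m + 2 ∧ (x - 1).natAbs = m) ∨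
      ((x + 1).natAbs = m ∧ (x - 1).natAbs = m + 2) := by omega
  rcases hneighbours with ⟨hp, hn⟩ | ⟨hp, hn⟩ <;>
  · rw [hp, hn, hm]
    field_simp
    ring

lemma geometric_profile_solves_iff {C r ω a : ℝ} (hC : C ≠ 0) (hr : r ≠ 0) {ψ : ℤ → ℝ}
    (hψ : ∀ x, ψ x = C * r ^ x.natAbs) :
    (∀ x : ℤ, -(ω * ψ x) =
        -(ψ (x + 1) - 2 * ψ x + ψ (x - 1)) - (if x = 0 then (1:ℝ) else 0) * (a * ψ 0))
      ↔ ω = r + r⁻¹ - 2 ∧ a = r⁻¹ - r := by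
  have hrec : ∀ x ≠ 0, ψ (x + 1) + ψ (x - 1) = (r + r⁻¹) * ψ x := fun x hx => by
    simp only [hψ]
    linear_combination C * pow_natAbs_add_one_add_pow_natAbs_sub_one hr hx
  have h0 : ψ 0 = C := by simp [hψ]
  have h1 : ψ (0 + 1) = C * r := by simp [hψ]
  have hm1 : ψ (0 - 1) = C * r := by simp [hψ]
  constructor
  · intro h
    have hω : ω = r + r⁻¹ - 2 := by
      have := h 1
      rw [if_neg one_ne_zero] at this
      have hψ1 : ψ 1 ≠ 0 := by
        rw [hψ]
        exact mul_ne_zero hC (pow_ne_zero _ hr)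
      apply mul_right_cancel₀ hψ1
      linear_combination -this + hrec 1 one_ne_zero
    refine ⟨hω, mul_right_cancel₀ hC ?_⟩
    have := h 0
    rw [if_pos rfl, h0, h1, hm1, hω] at this
    field_simp at this ⊢
    linear_combination this
  · rintro ⟨rfl, rfl⟩ x
    by_cases hx : x = 0
    · subst hx
      rw [if_pos rfl, h0, h1, hm1]
      ring
    · rw [if_neg hx]
      linear_combination hrec x hx

lemma neg_exp_neg_add_inv (k : ℝ) : -exp (-k) + (-exp (-k))⁻¹ = -2 * cosh k := by
  rw [cosh_eq, inv_neg, ← exp_neg, neg_neg]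
  ring

lemma inv_neg_exp_neg_sub (k : ℝ) : (-exp (-k))⁻¹ - -exp (-k) = -2 * sinh k := by
  rw [sinh_eq, inv_neg, ← exp_neg, neg_neg]
  ring

lemma neg_one_pow_mul_exp_neg_mul_abs (k : ℝ) (x : ℤ) :
    (-1 : ℝ) ^ x.natAbs * exp (-k * |(x : ℝ)|) = (-exp (-k)) ^ x.natAbs := by
  rw [neg_pow (exp (-k)), ← exp_nat_mul, Nat.cast_natAbs, Int.cast_abs, mul_comm _ (-k)]

/-- Characterization of the second family of solitary waves (ω < -4) of the
discrete Schrödinger equation coupled to an oscillator at x = 0: the profile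
ψ(x) = C (-1)^{|x|} e^{-k|x|} (C > 0, k > 0) satisfies
-ω ψ(x) = -Δψ(x) - δ_{0x} a ψ(0) for all x ∈ ℤ iff
cosh k = -(ω+2)/2 and sinh k = -a/2 (in particular ω < -4 and a < 0). -/
theorem solitary_wave_char_neg (C ω a k : ℝ) (hC : 0 < C) (hk : 0 < k)
    (ψ : ℤ → ℝ) (hψ : ∀ x : ℤ, ψ x = C * (-1 : ℝ) ^ x.natAbs * Real.exp (-k * |(x : ℝ)|)) :
    (∀ x : ℤ, -(ω * ψ x) =
        -(ψ (x + 1) - 2 * ψ x + ψ (x - 1)) - (if x = 0 then (1:ℝ) else 0) * (a * ψ 0))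
      ↔ (Real.cosh k = -(ω + 2) / 2 ∧ Real.sinh k = -a / 2 ∧ ω < -4 ∧ a < 0) := by
  have hψ' : ∀ x, ψ x = C * (-exp (-k)) ^ x.natAbs := fun x => by
    rw [hψ, mul_assoc, neg_one_pow_mul_exp_neg_mul_abs]
  rw [geometric_profile_solves_iff hC.ne' (neg_ne_zero.2 (exp_pos _).ne') hψ',
    neg_exp_neg_add_inv, inv_neg_exp_neg_sub]
  have hcosh : 1 < cosh k := one_lt_cosh.2 hk.ne'
  have hsinh : 0 < sinh k := sinh_pos_iff.2 hk
  constructor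
  · rintro ⟨rfl, rfl⟩
    exact ⟨by ring, by ring, by linarith, by linarith⟩
  · rintro ⟨hω, ha, -, -⟩
    constructor <;> linarith
end

section
/- Let ω > 0 and let f(ν) = sin(θ|x|)·sin(θ|y|)/sin θ where θ = θ(ν) = arccos((ω+2-ν)/2), for ν ∈ (ω, ω+4) and fixed integers x, y. Then there is a constant C_0 such that the second derivative satisfies |f''(ν)| ≤ C_0(1+|x|²)(1+|y|²)·(ν-ω)^{-3/2} for ω < ν < ω+1, and |f''(ν)| ≤ C_0(1+|x|²)(1+|y|²)·(4+ω-ν)^{-3/2} for ω+3 < ν < ω+4. -/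
/-!
With `θ = arccos ((ω + 2 - ν) / 2)` and `a = |x|`, `b = |y|`, telescoping gives
`sin (a θ) sin (b θ) / sin θ = ∑_{j < b} sin ((a - b + 1 + 2 j) θ)`, so `f` is a sum of
`b` smooth terms `sin (k θ)`. Since `θ' = 1 / (2 sin θ)`, the second derivative of each term is
bounded by `(k² + |k|) / (4 sin³ θ)`; for `b ≤ a` (the other case by symmetry) every `k` lies in
`(0, 2a]`, giving `|f''| ≤ (1 + a²)(1 + b²) / sin³ θ`. Finally
`4 sin² θ = (ν - ω)(4 + ω - ν)` is comparable to the distance to the nearby edge.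
-/

open Real Finset Set

theorem sum_range_sin_mul_sin (a b : ℕ) (θ : ℝ) :
    (∑ j ∈ range b, sin ((a - b + 1 + 2 * j : ℝ) * θ)) * sin θ = sin (θ * a) * sin (θ * b) := by
  set g : ℕ → ℝ := fun j => cos ((a - b + 2 * j : ℝ) * θ)
  have hterm : ∀ j ∈ range b,
      sin ((a - b + 1 + 2 * j : ℝ) * θ) * sin θ = (g j - g (j + 1)) / 2 := by
    intro j _
    rw [eq_div_iff two_ne_zero, mul_comm, ← mul_assoc, two_mul_sin_mul_sin]
    simp only [g]
    push_cast
    ring_nf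
  rw [sum_mul, sum_congr rfl hterm, ← sum_div, sum_range_sub', div_eq_iff two_ne_zero, mul_comm,
    ← mul_assoc, two_mul_sin_mul_sin]
  simp only [g]
  push_cast
  ring_nf

theorem abs_neg_sq_mul_sin_add_mul_cos_div_le (k θ : ℝ) (hθ : 0 < sin θ) :
    |-(k ^ 2 * sin (k * θ) * sin θ + k * cos (k * θ) * cos θ) / (4 * sin θ ^ 3)|
      ≤ (k ^ 2 + |k|) / (4 * sin θ ^ 3) := by
  have hden : 0 < 4 * sin θ ^ 3 := by positivity
  rw [abs_div, abs_neg, abs_of_pos hden]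
  refine div_le_div_of_nonneg_right ?_ hden.le
  calc |k ^ 2 * sin (k * θ) * sin θ + k * cos (k * θ) * cos θ|
      ≤ |k ^ 2 * sin (k * θ) * sin θ| + |k * cos (k * θ) * cos θ| := abs_add_le _ _
    _ ≤ k ^ 2 * 1 * 1 + |k| * 1 * 1 := by
      simp only [abs_mul, abs_pow, sq_abs]
      gcongr <;> first | exact abs_sin_le_one _ | exact abs_cos_le_one _
    _ = k ^ 2 + |k| := by ring

theorem sum_range_sq_add_abs_le (a b : ℕ) (hba : b ≤ a) :
    ∑ j ∈ range b, ((a - b + 1 + 2 * j : ℝ) ^ 2 + |(a - b + 1 + 2 * j : ℝ)|)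
      ≤ 4 * ((1 + a ^ 2) * (1 + b ^ 2)) := by
  have hba' : (b : ℝ) ≤ a := by exact_mod_cast hba
  have hterm : ∀ j ∈ range b,
      (a - b + 1 + 2 * j : ℝ) ^ 2 + |(a - b + 1 + 2 * j : ℝ)| ≤ 4 * a ^ 2 := by
    intro j hj
    have hj : (j : ℝ) + 1 ≤ b := by exact_mod_cast mem_range.1 hj
    rw [abs_of_pos (by positivity)]
    nlinarith
  calc _ ≤ ∑ _j ∈ range b, 4 * (a : ℝ) ^ 2 := sum_le_sum hterm
    _ = b * (4 * a ^ 2) := by rw [sum_const, card_range, nsmul_eq_mul]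
    _ ≤ 4 * ((1 + a ^ 2) * (1 + b ^ 2)) := by nlinarith [sq_nonneg ((b : ℝ) - 1)]

theorem inv_pow_three_le_rpow {s t : ℝ} (hs : 0 < s) (ht : 0 < t) (h : t ≤ 4 * s ^ 2) :
    (s ^ 3)⁻¹ ≤ 8 * t ^ (-(3 : ℝ) / 2) := by
  have h8 : (4 : ℝ) ^ ((3 : ℝ) / 2) = 8 := by
    rw [show (4 : ℝ) = 2 ^ (2 : ℝ) by norm_num, ← rpow_mul (by norm_num)]
    norm_num
  have hcube : (t / 4) ^ ((3 : ℝ) / 2) ≤ s ^ 3 := by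
    calc (t / 4) ^ ((3 : ℝ) / 2) ≤ (s ^ 2) ^ ((3 : ℝ) / 2) :=
          rpow_le_rpow (by positivity) (by linarith) (by norm_num)
      _ = s ^ 3 := by
        rw [← rpow_natCast, ← rpow_mul hs.le]
        norm_num
  rw [neg_div, rpow_neg ht.le, ← div_eq_mul_inv, ← h8, ← inv_div, ← div_rpow ht.le (by norm_num)]
  exact inv_anti₀ (by positivity) hcube

/-- The angle `θ(ν)` for the band `(c - 2, c + 2)`; the band `(ω, ω + 4)` is `c = ω + 2`. -/
noncomputable def edgeAngle (c ν : ℝ) : ℝ := arccos ((c - ν) / 2)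

section EdgeAngle

variable {c ν : ℝ}

theorem cos_edgeAngle (hν : ν ∈ Ioo (c - 2) (c + 2)) : cos (edgeAngle c ν) = (c - ν) / 2 :=
  cos_arccos (by linarith [hν.2]) (by linarith [hν.1])

theorem sin_edgeAngle_pos (hν : ν ∈ Ioo (c - 2) (c + 2)) : 0 < sin (edgeAngle c ν) :=
  sin_pos_of_pos_of_lt_pi (arccos_pos.2 (by linarith [hν.1])) (arccos_lt_pi.2 (by linarith [hν.2]))

theorem sin_edgeAngle_sq (hν : ν ∈ Ioo (c - 2) (c + 2)) :
    sin (edgeAngle c ν) ^ 2 = (2 - (c - ν)) * (2 + (c - ν)) / 4 := by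
  rw [sin_sq, cos_edgeAngle hν]; ring

theorem hasDerivAt_edgeAngle (hν : ν ∈ Ioo (c - 2) (c + 2)) :
    HasDerivAt (edgeAngle c) (1 / (2 * sin (edgeAngle c ν))) ν := by
  have hu : HasDerivAt (fun ν => (c - ν) / 2) (-1 / 2) ν := by
    simpa using ((hasDerivAt_id ν).const_sub c).div_const 2
  refine ((hasDerivAt_arccos (by linarith [hν.2]) (by linarith [hν.1])).comp ν hu).congr_deriv ?_
  rw [edgeAngle, sin_arccos]
  ring

theorem hasDerivAt_sin_edgeAngle (hν : ν ∈ Ioo (c - 2) (c + 2)) :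
    HasDerivAt (fun ν => sin (edgeAngle c ν))
      (cos (edgeAngle c ν) / (2 * sin (edgeAngle c ν))) ν := by
  convert (hasDerivAt_edgeAngle hν).sin using 1
  ring

theorem hasDerivAt_sin_mul_edgeAngle (k : ℝ) (hν : ν ∈ Ioo (c - 2) (c + 2)) :
    HasDerivAt (fun ν => sin (k * edgeAngle c ν))
      (k * cos (k * edgeAngle c ν) / (2 * sin (edgeAngle c ν))) ν := by
  convert ((hasDerivAt_edgeAngle hν).const_mul k).sin using 1
  ring

theorem hasDerivAt_deriv_sin_mul_edgeAngle (k : ℝ) (hν : ν ∈ Ioo (c - 2) (c + 2)) :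
    HasDerivAt (fun ν => k * cos (k * edgeAngle c ν) / (2 * sin (edgeAngle c ν)))
      (-(k ^ 2 * sin (k * edgeAngle c ν) * sin (edgeAngle c ν)
          + k * cos (k * edgeAngle c ν) * cos (edgeAngle c ν))
          / (4 * sin (edgeAngle c ν) ^ 3)) ν := by
  have hs := (sin_edgeAngle_pos hν).ne'
  refine ((((hasDerivAt_edgeAngle hν).const_mul k).cos.const_mul k).fun_div
    ((hasDerivAt_sin_edgeAngle hν).const_mul 2) (by positivity)).congr_deriv ?_
  field_simp
  ring

theorem hasDerivAt_deriv_sum_sin_mul_edgeAngle {ι : Type*} (s : Finset ι) (k : ι → ℝ)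
    (hν : ν ∈ Ioo (c - 2) (c + 2)) :
    HasDerivAt (deriv fun ν => ∑ j ∈ s, sin (k j * edgeAngle c ν))
      (∑ j ∈ s, -(k j ^ 2 * sin (k j * edgeAngle c ν) * sin (edgeAngle c ν)
          + k j * cos (k j * edgeAngle c ν) * cos (edgeAngle c ν))
          / (4 * sin (edgeAngle c ν) ^ 3)) ν := by
  have hderiv : deriv (fun ν => ∑ j ∈ s, sin (k j * edgeAngle c ν)) =ᶠ[nhds ν]
      fun ν => ∑ j ∈ s, k j * cos (k j * edgeAngle c ν) / (2 * sin (edgeAngle c ν)) := by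
    filter_upwards [isOpen_Ioo.mem_nhds hν] with μ hμ
    exact (HasDerivAt.fun_sum fun j _ => hasDerivAt_sin_mul_edgeAngle (k j) hμ).deriv
  exact (HasDerivAt.fun_sum fun j _ =>
    hasDerivAt_deriv_sin_mul_edgeAngle (k j) hν).congr_of_eventuallyEq hderiv

end EdgeAngle

noncomputable def jumpKernel (c a b ν : ℝ) : ℝ :=
  sin (edgeAngle c ν * a) * sin (edgeAngle c ν * b) / sin (edgeAngle c ν)

theorem jumpKernel_comm (c a b : ℝ) : jumpKernel c a b = jumpKernel c b a := by
  funext ν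
  rw [jumpKernel, jumpKernel, mul_comm (sin (edgeAngle c ν * a))]

section JumpKernel

variable {c ν : ℝ}

theorem jumpKernel_eq_sum (a b : ℕ) (hν : ν ∈ Ioo (c - 2) (c + 2)) :
    jumpKernel c a b ν = ∑ j ∈ range b, sin ((a - b + 1 + 2 * j : ℝ) * edgeAngle c ν) := by
  rw [jumpKernel, div_eq_iff (sin_edgeAngle_pos hν).ne', sum_range_sin_mul_sin]

theorem abs_deriv_deriv_jumpKernel_le_of_le (a b : ℕ) (hba : b ≤ a) (hν : ν ∈ Ioo (c - 2) (c + 2)) :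
    |deriv (deriv (jumpKernel c a b)) ν| ≤ (1 + a ^ 2) * (1 + b ^ 2) / sin (edgeAngle c ν) ^ 3 := by
  set k : ℕ → ℝ := fun j => a - b + 1 + 2 * j
  have hs := sin_edgeAngle_pos hν
  have hsum : jumpKernel c a b =ᶠ[nhds ν] fun ν => ∑ j ∈ range b, sin (k j * edgeAngle c ν) := by
    filter_upwards [isOpen_Ioo.mem_nhds hν] with μ hμ using jumpKernel_eq_sum a b hμ
  rw [hsum.deriv.deriv_eq, (hasDerivAt_deriv_sum_sin_mul_edgeAngle (range b) k hν).deriv]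
  calc _ ≤ ∑ j ∈ range b, (k j ^ 2 + |k j|) / (4 * sin (edgeAngle c ν) ^ 3) :=
        (abs_sum_le_sum_abs _ _).trans (sum_le_sum fun j _ =>
          abs_neg_sq_mul_sin_add_mul_cos_div_le (k j) _ hs)
    _ ≤ 4 * ((1 + a ^ 2) * (1 + b ^ 2)) / (4 * sin (edgeAngle c ν) ^ 3) := by
      rw [← sum_div]
      gcongr
      exact sum_range_sq_add_abs_le a b hba
    _ = _ := by ring

theorem abs_deriv_deriv_jumpKernel_le (a b : ℕ) (hν : ν ∈ Ioo (c - 2) (c + 2)) :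
    |deriv (deriv (jumpKernel c a b)) ν| ≤ (1 + a ^ 2) * (1 + b ^ 2) / sin (edgeAngle c ν) ^ 3 := by
  rcases le_total b a with hba | hab
  · exact abs_deriv_deriv_jumpKernel_le_of_le a b hba hν
  · rw [jumpKernel_comm, mul_comm (1 + (a : ℝ) ^ 2)]
    exact abs_deriv_deriv_jumpKernel_le_of_le b a hab hν

end JumpKernel

theorem abs_deriv_deriv_jumpKernel_le_rpow {c ν t : ℝ} (x y : ℤ) (hν : ν ∈ Ioo (c - 2) (c + 2))
    (ht : 0 < t) (htν : t ≤ (2 - (c - ν)) * (2 + (c - ν))) :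
    |deriv (deriv (jumpKernel c |(x : ℝ)| |(y : ℝ)|)) ν|
      ≤ 8 * (1 + |(x : ℝ)| ^ 2) * (1 + |(y : ℝ)| ^ 2) * t ^ (-(3 : ℝ) / 2) := by
  have hx : |(x : ℝ)| = x.natAbs := by rw [Nat.cast_natAbs, Int.cast_abs]
  have hy : |(y : ℝ)| = y.natAbs := by rw [Nat.cast_natAbs, Int.cast_abs]
  have hsin : (sin (edgeAngle c ν) ^ 3)⁻¹ ≤ 8 * t ^ (-(3 : ℝ) / 2) :=
    inv_pow_three_le_rpow (sin_edgeAngle_pos hν) ht (by rw [sin_edgeAngle_sq hν]; linarith)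
  rw [hx, hy]
  calc _ ≤ (1 + (x.natAbs : ℝ) ^ 2) * (1 + (y.natAbs : ℝ) ^ 2) * (sin (edgeAngle c ν) ^ 3)⁻¹ :=
        abs_deriv_deriv_jumpKernel_le _ _ hν
    _ ≤ (1 + (x.natAbs : ℝ) ^ 2) * (1 + (y.natAbs : ℝ) ^ 2) * (8 * t ^ (-(3 : ℝ) / 2)) := by
        gcongr
    _ = _ := by ring

theorem edge_second_derivative_bound_general (ω : ℝ) :
    ∃ C₀ : ℝ, 0 < C₀ ∧ ∀ (x y : ℤ) (ν : ℝ),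
      (ν ∈ Set.Ioo ω (ω + 1) →
        |deriv (deriv (fun ν' : ℝ =>
            Real.sin (Real.arccos ((ω + 2 - ν') / 2) * |(x : ℝ)|) *
              Real.sin (Real.arccos ((ω + 2 - ν') / 2) * |(y : ℝ)|) /
              Real.sin (Real.arccos ((ω + 2 - ν') / 2)))) ν|
          ≤ C₀ * (1 + |(x : ℝ)| ^ 2) * (1 + |(y : ℝ)| ^ 2) * (ν - ω) ^ (-(3:ℝ)/2)) ∧
      (ν ∈ Set.Ioo (ω + 3) (ω + 4) →
        |deriv (deriv (fun ν' : ℝ =>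
            Real.sin (Real.arccos ((ω + 2 - ν') / 2) * |(x : ℝ)|) *
              Real.sin (Real.arccos ((ω + 2 - ν') / 2) * |(y : ℝ)|) /
              Real.sin (Real.arccos ((ω + 2 - ν') / 2)))) ν|
          ≤ C₀ * (1 + |(x : ℝ)| ^ 2) * (1 + |(y : ℝ)| ^ 2) * (4 + ω - ν) ^ (-(3:ℝ)/2)) := by
  refine ⟨8, by norm_num, fun x y ν => ⟨fun ⟨hlo, hhi⟩ => ?_, fun ⟨hlo, hhi⟩ => ?_⟩⟩
  · exact abs_deriv_deriv_jumpKernel_le_rpow (c := ω + 2) x y ⟨by linarith, by linarith⟩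
      (by linarith) (by nlinarith)
  · exact abs_deriv_deriv_jumpKernel_le_rpow (c := ω + 2) x y ⟨by linarith, by linarith⟩
      (by linarith) (by nlinarith)

/-- Edge estimate for the second derivative of
f(ν) = sin(θ|x|) sin(θ|y|)/sin θ, θ = arccos((ω+2-ν)/2):
|f''(ν)| ≤ C₀(1+|x|²)(1+|y|²)(ν-ω)^{-3/2} near the lower edge and
|f''(ν)| ≤ C₀(1+|x|²)(1+|y|²)(4+ω-ν)^{-3/2} near the upper edge. -/
theorem edge_second_derivative_bound (ω : ℝ) (hω : 0 < ω) :
    ∃ C₀ : ℝ, 0 < C₀ ∧ ∀ (x y : ℤ) (ν : ℝ),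
      (ν ∈ Set.Ioo ω (ω + 1) →
        |deriv (deriv (fun ν' : ℝ =>
            Real.sin (Real.arccos ((ω + 2 - ν') / 2) * |(x : ℝ)|) *
              Real.sin (Real.arccos ((ω + 2 - ν') / 2) * |(y : ℝ)|) /
              Real.sin (Real.arccos ((ω + 2 - ν') / 2)))) ν|
          ≤ C₀ * (1 + |(x : ℝ)| ^ 2) * (1 + |(y : ℝ)| ^ 2) * (ν - ω) ^ (-(3:ℝ)/2)) ∧
      (ν ∈ Set.Ioo (ω + 3) (ω + 4) →
        |deriv (deriv (fun ν' : ℝ =>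
            Real.sin (Real.arccos ((ω + 2 - ν') / 2) * |(x : ℝ)|) *
              Real.sin (Real.arccos ((ω + 2 - ν') / 2) * |(y : ℝ)|) /
              Real.sin (Real.arccos ((ω + 2 - ν') / 2)))) ν|
          ≤ C₀ * (1 + |(x : ℝ)| ^ 2) * (1 + |(y : ℝ)| ^ 2) * (4 + ω - ν) ^ (-(3:ℝ)/2)) :=
  edge_second_derivative_bound_general ω
end

section
/- Zygmund-type oscillatory integral lemma: Let F: [a,b] → B be a C² function with values in a Banach space B, with F(a) = F(b) = 0, F'' ∈ L¹(a+δ, b-δ; B) for every δ > 0, and suppose there is p ∈ (0,1) such that ‖F''(a+ζ)‖ and ‖F''(b-ζ)‖ are O(ζ^{p-2}) as ζ ↓ 0. Then I(t) = ∫_a^b e^{-itν} F(ν) dν satisfies ‖I(t)‖ = O(t^{-1-p}) as t → ∞. -/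
/-!
Fix `q > 0` with `a + q ≤ b - q` and cut `[a, b]` at distance `δ = q / t` from both endpoints.
On the two end pieces the integrand is `O(δ ^ p)`, so they contribute `O(δ ^ (p + 1))`. On the
middle piece integrate by parts twice against `e^{-itν}`: the boundary terms are
`t⁻¹ O(δ ^ p) + t⁻² O(δ ^ (p - 1))` and what remains is `t⁻² ∫ ‖F''‖ = t⁻² O(δ ^ (p - 1))`.
Here `F = O(ζ ^ p)`, `F' = O(ζ ^ (p - 1))` and `∫_ζ ‖F''‖ = O(ζ ^ (p - 1))` near an endpoint
follow from `F'' = O(ζ ^ (p - 2))` by integrating `F''` from an interior point and then `F'` from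
the endpoint, where `F` vanishes. For `δ = q / t` all these terms are `O(t ^ (-1 - p))`.
-/

open Set MeasureTheory intervalIntegral

section

variable {E : Type*} [NormedAddCommGroup E]

theorem integral_rpow_sub_two_le {p ζ q : ℝ} (hp : p < 1) (hζ : 0 < ζ) (hζq : ζ ≤ q) :
    ∫ s in ζ..q, s ^ (p - 2) ≤ ζ ^ (p - 1) / (1 - p) := by
  have h0 : (0 : ℝ) ∉ uIcc ζ q := by rw [uIcc_of_le hζq]; exact fun h => hζ.not_ge h.1
  rw [integral_rpow (Or.inr ⟨by linarith, h0⟩), show p - 2 + 1 = p - 1 by ring,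
    ← neg_div_neg_eq, neg_sub, neg_sub]
  exact div_le_div_of_nonneg_right (sub_le_self _ (Real.rpow_nonneg (hζ.le.trans hζq) _))
    (by linarith)

theorem integral_norm_le_of_norm_le_rpow_sub_two {f : ℝ → E} {K p ζ q : ℝ} (hp : p < 1)
    (hζ : 0 < ζ) (hζq : ζ ≤ q) (hf : ContinuousOn f (Icc ζ q))
    (hK : ∀ s ∈ Icc ζ q, ‖f s‖ ≤ K * s ^ (p - 2)) :
    ∫ s in ζ..q, ‖f s‖ ≤ K / (1 - p) * ζ ^ (p - 1) := by
  have hK0 : 0 ≤ K := nonneg_of_mul_nonneg_left ((norm_nonneg _).trans (hK ζ ⟨le_rfl, hζq⟩))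
    (by positivity)
  have hpow : ContinuousOn (fun s : ℝ => K * s ^ (p - 2)) (Icc ζ q) :=
    continuousOn_const.mul (continuousOn_id.rpow_const fun s hs =>
      Or.inl (hζ.trans_le hs.1).ne')
  calc ∫ s in ζ..q, ‖f s‖ ≤ ∫ s in ζ..q, K * s ^ (p - 2) :=
        integral_mono_on hζq (hf.norm.intervalIntegrable_of_Icc hζq)
          (hpow.intervalIntegrable_of_Icc hζq) hK
    _ = K * ∫ s in ζ..q, s ^ (p - 2) := intervalIntegral.integral_const_mul _ _
    _ ≤ K * (ζ ^ (p - 1) / (1 - p)) := by gcongr; exact integral_rpow_sub_two_le hp hζ hζq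
    _ = K / (1 - p) * ζ ^ (p - 1) := by ring

theorem norm_le_of_norm_deriv_le_rpow_sub_one [NormedSpace ℝ E] {g g' : ℝ → E} {C p ζ : ℝ}
    (hp : 0 < p) (hζ : 0 ≤ ζ) (hg : ContinuousOn g (Icc 0 ζ)) (hg0 : g 0 = 0)
    (hg' : ∀ s ∈ Ioo 0 ζ, HasDerivAt g (g' s) s) (hC : ∀ s ∈ Ioo 0 ζ, ‖g' s‖ ≤ C * s ^ (p - 1)) :
    ‖g ζ‖ ≤ C / p * ζ ^ p := by
  have key := norm_sub_le_integral_of_norm_deriv_le_of_le hζ hg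
    (fun s hs => (hg' s hs).differentiableAt.differentiableWithinAt)
    (ae_of_all _ fun s hs => (hg' s hs).deriv ▸ hC s hs)
    ((intervalIntegrable_rpow' (by linarith)).const_mul C)
  rw [hg0, sub_zero, intervalIntegral.integral_const_mul, integral_rpow (Or.inl (by linarith)),
    sub_add_cancel, Real.zero_rpow hp.ne', sub_zero] at key
  exact key.trans_eq (by ring)

theorem integral_norm_le_of_norm_le_rpow {f : ℝ → E} {C p δ : ℝ} (hp : -1 < p) (hδ : 0 ≤ δ)
    (hf : ContinuousOn f (Icc 0 δ)) (hC : ∀ s ∈ Ioo 0 δ, ‖f s‖ ≤ C * s ^ p) :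
    ∫ s in 0..δ, ‖f s‖ ≤ C * (δ ^ (p + 1) / (p + 1)) := by
  refine (integral_mono_on_of_le_Ioo hδ (hf.norm.intervalIntegrable_of_Icc hδ)
    ((intervalIntegrable_rpow' hp).const_mul C) hC).trans_eq ?_
  rw [intervalIntegral.integral_const_mul, integral_rpow (Or.inl hp),
    Real.zero_rpow (by linarith), sub_zero]

theorem one_le_rpow_one_sub_mul_rpow_sub_one {p s q : ℝ} (hp : p ≤ 1) (hs : 0 < s)
    (hsq : s ≤ q) :
    1 ≤ q ^ (1 - p) * s ^ (p - 1) :=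
  calc (1 : ℝ) = q ^ (1 - p) * q ^ (p - 1) := by
        rw [← Real.rpow_add (hs.trans_le hsq), sub_add_sub_cancel', sub_self, Real.rpow_zero]
    _ ≤ q ^ (1 - p) * s ^ (p - 1) := mul_le_mul_of_nonneg_left
        (Real.rpow_le_rpow_of_nonpos hs hsq (by linarith)) (Real.rpow_nonneg (hs.le.trans hsq) _)

theorem inv_pow_mul_div_rpow {q t : ℝ} (hq : 0 ≤ q) (ht : 0 < t) (n : ℕ) (r : ℝ) :
    t⁻¹ ^ n * (q / t) ^ r = q ^ r * t ^ (-(n + r)) := by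
  rw [Real.div_rpow hq ht.le, Real.rpow_neg ht.le, Real.rpow_add ht, Real.rpow_natCast, inv_pow]
  field_simp

theorem norm_deriv_le_rpow_of_norm_second_deriv_le [NormedSpace ℝ E] {g' g'' : ℝ → E}
    {K p q s : ℝ} (hp : p < 1) (hs : 0 < s) (hsq : s ≤ q)
    (hg'' : ∀ σ ∈ Icc s q, HasDerivAt g' (g'' σ) σ) (hg''c : ContinuousOn g'' (Icc s q))
    (hK : ∀ σ ∈ Icc s q, ‖g'' σ‖ ≤ K * σ ^ (p - 2)) :
    ‖g' s‖ ≤ (‖g' q‖ * q ^ (1 - p) + K / (1 - p)) * s ^ (p - 1) := by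
  have hvar : ‖g' q - g' s‖ ≤ ∫ σ in s..q, ‖g'' σ‖ :=
    norm_sub_le_integral_of_norm_deriv_le_of_le hsq (HasDerivAt.continuousOn hg'')
      (fun σ hσ => (hg'' σ (Ioo_subset_Icc_self hσ)).differentiableAt.differentiableWithinAt)
      (ae_of_all _ fun σ hσ => (hg'' σ (Ioo_subset_Icc_self hσ)).deriv ▸ le_rfl)
      (hg''c.norm.intervalIntegrable_of_Icc hsq)
  have hend : ‖g' q‖ ≤ ‖g' q‖ * q ^ (1 - p) * s ^ (p - 1) := by
    rw [mul_assoc]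
    exact le_mul_of_one_le_right (norm_nonneg _)
      (one_le_rpow_one_sub_mul_rpow_sub_one hp.le hs hsq)
  calc ‖g' s‖ ≤ ‖g' q‖ + ‖g' q - g' s‖ := norm_le_insert _ _
    _ ≤ ‖g' q‖ * q ^ (1 - p) * s ^ (p - 1) + K / (1 - p) * s ^ (p - 1) :=
        add_le_add hend (hvar.trans (integral_norm_le_of_norm_le_rpow_sub_two hp hs hsq hg''c hK))
    _ = _ := by ring

theorem exists_rpow_bounds_of_norm_second_deriv_le [NormedSpace ℝ E] {g g' g'' : ℝ → E}
    {K p q : ℝ} (hp : p ∈ Ioo 0 1) (hq : 0 < q) (hg : ContinuousOn g (Icc 0 q)) (hg0 : g 0 = 0)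
    (hg' : ∀ s ∈ Ioc 0 q, HasDerivAt g (g' s) s)
    (hg'' : ∀ s ∈ Ioc 0 q, HasDerivAt g' (g'' s) s) (hg''c : ContinuousOn g'' (Ioc 0 q))
    (hK : ∀ s ∈ Ioc 0 q, ‖g'' s‖ ≤ K * s ^ (p - 2)) :
    ∃ C, 0 ≤ C ∧ ∀ s ∈ Ioc 0 q, ‖g s‖ ≤ C * s ^ p ∧ ‖g' s‖ ≤ C * s ^ (p - 1) ∧
      ∫ σ in s..q, ‖g'' σ‖ ≤ C * s ^ (p - 1) := by
  obtain ⟨hp0, hp1⟩ := hp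
  have hK0 : 0 ≤ K := nonneg_of_mul_nonneg_left ((norm_nonneg _).trans (hK q ⟨hq, le_rfl⟩))
    (by positivity)
  have hsub : ∀ s ∈ Ioc (0 : ℝ) q, Icc s q ⊆ Ioc 0 q := fun s hs σ hσ =>
    ⟨hs.1.trans_le hσ.1, hσ.2⟩
  set C₁ := ‖g' q‖ * q ^ (1 - p) + K / (1 - p)
  have hder : ∀ s ∈ Ioc 0 q, ‖g' s‖ ≤ C₁ * s ^ (p - 1) := fun s hs =>
    norm_deriv_le_rpow_of_norm_second_deriv_le hp1 hs.1 hs.2 (fun σ hσ => hg'' σ (hsub s hs hσ))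
      (hg''c.mono (hsub s hs)) fun σ hσ => hK σ (hsub s hs hσ)
  have hval : ∀ s ∈ Ioc 0 q, ‖g s‖ ≤ C₁ / p * s ^ p := fun s hs =>
    norm_le_of_norm_deriv_le_rpow_sub_one hp0 hs.1.le (hg.mono (Icc_subset_Icc_right hs.2)) hg0
      (fun σ hσ => hg' σ ⟨hσ.1, hσ.2.le.trans hs.2⟩)
      (fun σ hσ => hder σ ⟨hσ.1, hσ.2.le.trans hs.2⟩)
  have hC₁ : K / (1 - p) ≤ C₁ := le_add_of_nonneg_left (by positivity)
  have hC₁0 : 0 ≤ C₁ := (div_nonneg hK0 (by linarith)).trans hC₁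
  refine ⟨C₁ / p + C₁, by positivity, fun s hs => ?_⟩
  have hmono : ∀ {C' : ℝ} (r : ℝ), C' ≤ C₁ / p + C₁ → C' * s ^ r ≤ (C₁ / p + C₁) * s ^ r :=
    fun r h => mul_le_mul_of_nonneg_right h (Real.rpow_nonneg hs.1.le r)
  have hC₁p : 0 ≤ C₁ / p := by positivity
  refine ⟨(hval s hs).trans (hmono _ (by linarith)), (hder s hs).trans (hmono _ (by linarith)),
    ?_⟩
  exact (integral_norm_le_of_norm_le_rpow_sub_two hp1 hs.1 hs.2 (hg''c.mono (hsub s hs))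
    fun σ hσ => hK σ (hsub s hs hσ)).trans (hmono _ (by linarith))

structure EndpointRpowBounds (F F' F'' : ℝ → E) (a b p q C : ℝ) : Prop where
  left : ∀ s ∈ Ioc 0 q, ‖F (a + s)‖ ≤ C * s ^ p
  right : ∀ s ∈ Ioc 0 q, ‖F (b - s)‖ ≤ C * s ^ p
  deriv_left : ∀ s ∈ Ioc 0 q, ‖F' (a + s)‖ ≤ C * s ^ (p - 1)
  deriv_right : ∀ s ∈ Ioc 0 q, ‖F' (b - s)‖ ≤ C * s ^ (p - 1)
  integral_second_deriv : ∀ s ∈ Ioc 0 q, ∫ ν in (a + s)..(b - s), ‖F'' ν‖ ≤ C * s ^ (p - 1)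

theorem integral_norm_le_of_integral_norm_le_near_endpoints {f : ℝ → E} {a b p q s Ca Cb : ℝ}
    (hp : p ≤ 1) (hs : s ∈ Ioc 0 q) (hqab : a + q ≤ b - q) (hf : ContinuousOn f (Ioo a b))
    (ha : ∫ σ in s..q, ‖f (a + σ)‖ ≤ Ca * s ^ (p - 1))
    (hb : ∫ σ in s..q, ‖f (b - σ)‖ ≤ Cb * s ^ (p - 1)) :
    ∫ ν in (a + s)..(b - s), ‖f ν‖ ≤
      (Ca + Cb + (∫ ν in (a + q)..(b - q), ‖f ν‖) * q ^ (1 - p)) * s ^ (p - 1) := by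
  have hsub : Icc (a + s) (b - s) ⊆ Ioo a b := fun ν hν =>
    ⟨by linarith [hν.1, hs.1], by linarith [hν.2, hs.1]⟩
  have hint : ∀ u ∈ Icc (a + s) (b - s), ∀ v ∈ Icc (a + s) (b - s),
      IntervalIntegrable (fun ν => ‖f ν‖) volume u v := fun u hu v hv =>
    ((hf.mono hsub).mono (uIcc_subset_Icc hu hv)).norm.intervalIntegrable
  have h₁ : a + q ∈ Icc (a + s) (b - s) := ⟨by linarith [hs.2], by linarith [hs.2]⟩
  have h₂ : b - q ∈ Icc (a + s) (b - s) := ⟨by linarith [hs.2], by linarith [hs.2]⟩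
  have hl : a + s ∈ Icc (a + s) (b - s) := ⟨le_rfl, h₁.1.trans h₁.2⟩
  have hr : b - s ∈ Icc (a + s) (b - s) := ⟨h₁.1.trans h₁.2, le_rfl⟩
  have hmid : 0 ≤ ∫ ν in (a + q)..(b - q), ‖f ν‖ := integral_nonneg hqab fun _ _ => norm_nonneg _
  calc ∫ ν in (a + s)..(b - s), ‖f ν‖
      = (∫ σ in s..q, ‖f (a + σ)‖) + (∫ ν in (a + q)..(b - q), ‖f ν‖) +
          ∫ σ in s..q, ‖f (b - σ)‖ := by
        rw [intervalIntegral.integral_comp_add_left (fun ν => ‖f ν‖),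
          intervalIntegral.integral_comp_sub_left (fun ν => ‖f ν‖),
          integral_add_adjacent_intervals (hint _ hl _ h₁) (hint _ h₁ _ h₂),
          integral_add_adjacent_intervals (hint _ hl _ h₂) (hint _ h₂ _ hr)]
    _ ≤ Ca * s ^ (p - 1) + (∫ ν in (a + q)..(b - q), ‖f ν‖) * (q ^ (1 - p) * s ^ (p - 1)) +
          Cb * s ^ (p - 1) := by
        gcongr
        exact le_mul_of_one_le_right hmid (one_le_rpow_one_sub_mul_rpow_sub_one hp hs.1 hs.2)
    _ = _ := by ring

theorem exists_endpointRpowBounds [NormedSpace ℝ E] {F F' F'' : ℝ → E} {a b p q K : ℝ}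
    (hp : p ∈ Ioo 0 1) (hq : 0 < q) (hqab : a + q ≤ b - q)
    (hFc : ContinuousOn F (Icc a b)) (hFa : F a = 0) (hFb : F b = 0)
    (hF : ∀ ν ∈ Ioo a b, HasDerivAt F (F' ν) ν) (hF' : ∀ ν ∈ Ioo a b, HasDerivAt F' (F'' ν) ν)
    (hF''c : ContinuousOn F'' (Ioo a b))
    (hK : ∀ s ∈ Ioc 0 q, ‖F'' (a + s)‖ ≤ K * s ^ (p - 2) ∧ ‖F'' (b - s)‖ ≤ K * s ^ (p - 2)) :
    ∃ C, EndpointRpowBounds F F' F'' a b p q C := by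
  have hmem_a : ∀ s ∈ Ioc 0 q, a + s ∈ Ioo a b := fun s hs =>
    ⟨by linarith [hs.1], by linarith [hs.2]⟩
  have hmem_b : ∀ s ∈ Ioc 0 q, b - s ∈ Ioo a b := fun s hs =>
    ⟨by linarith [hs.2], by linarith [hs.1]⟩
  obtain ⟨Ca, hCa0, hleft⟩ := exists_rpow_bounds_of_norm_second_deriv_le (g := fun s => F (a + s))
    (g' := fun s => F' (a + s)) (g'' := fun s => F'' (a + s)) hp hq
    (hFc.comp (by fun_prop) fun s hs => ⟨by linarith [hs.1], by linarith [hs.2]⟩)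
    (by simpa using hFa) (fun s hs => (hF _ (hmem_a s hs)).comp_const_add a s)
    (fun s hs => (hF' _ (hmem_a s hs)).comp_const_add a s)
    (hF''c.comp (by fun_prop) hmem_a) fun s hs => (hK s hs).1
  obtain ⟨Cb, hCb0, hright⟩ := exists_rpow_bounds_of_norm_second_deriv_le (g := fun s => F (b - s))
    (g' := fun s => -F' (b - s)) (g'' := fun s => F'' (b - s)) hp hq
    (hFc.comp (by fun_prop) fun s hs => ⟨by linarith [hs.2], by linarith [hs.1]⟩)
    (by simpa using hFb) (fun s hs => (hF _ (hmem_b s hs)).comp_const_sub b s)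
    (fun s hs => by simpa [Pi.neg_def] using ((hF' _ (hmem_b s hs)).comp_const_sub b s).neg)
    (hF''c.comp (by fun_prop) hmem_b) fun s hs => (hK s hs).2
  set C := Ca + Cb + (∫ ν in (a + q)..(b - q), ‖F'' ν‖) * q ^ (1 - p)
  have hq' : 0 ≤ (∫ ν in (a + q)..(b - q), ‖F'' ν‖) * q ^ (1 - p) :=
    mul_nonneg (integral_nonneg hqab fun _ _ => norm_nonneg _) (Real.rpow_nonneg hq.le _)
  have hmono : ∀ {C' : ℝ} (r : ℝ), C' ≤ C → ∀ s ∈ Ioc (0 : ℝ) q, C' * s ^ r ≤ C * s ^ r :=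
    fun r h s hs => mul_le_mul_of_nonneg_right h (Real.rpow_nonneg hs.1.le r)
  have hCa : Ca ≤ C := by linarith
  have hCb : Cb ≤ C := by linarith
  refine ⟨C, ⟨fun s hs => ?_, fun s hs => ?_, fun s hs => ?_, fun s hs => ?_, fun s hs => ?_⟩⟩
  · exact (hleft s hs).1.trans (hmono _ hCa s hs)
  · exact (hright s hs).1.trans (hmono _ hCb s hs)
  · exact (hleft s hs).2.1.trans (hmono _ hCa s hs)
  · simpa using (hright s hs).2.1.trans (hmono _ hCb s hs)
  · exact (integral_norm_le_of_integral_norm_le_near_endpoints hp.2.le hs hqab hF''c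
      (hleft s hs).2.2 (hright s hs).2.2).trans (hmono _ le_rfl s hs)

theorem integral_cexp_mul_smul_eq [NormedSpace ℂ E] [CompleteSpace E]
    {c : ℂ} (hc : c ≠ 0) {F F' F'' : ℝ → E} {x y : ℝ}
    (hF : ∀ ν ∈ uIcc x y, HasDerivAt F (F' ν) ν) (hF' : ∀ ν ∈ uIcc x y, HasDerivAt F' (F'' ν) ν)
    (hF'' : ContinuousOn F'' (uIcc x y)) :
    ∫ ν in x..y, Complex.exp (c * ν) • F ν =
      c⁻¹ • (Complex.exp (c * y) • F y - Complex.exp (c * x) • F x)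
        - c⁻¹ ^ 2 • (Complex.exp (c * y) • F' y - Complex.exp (c * x) • F' x)
        + c⁻¹ ^ 2 • ∫ ν in x..y, Complex.exp (c * ν) • F'' ν := by
  have he : ∀ ν : ℝ, HasDerivAt (fun ν : ℝ => Complex.exp (c * ν)) (c * Complex.exp (c * ν)) ν :=
    fun ν => by simpa [mul_comm] using ((hasDerivAt_id (ν : ℂ)).const_mul c).cexp.comp_ofReal
  have hcont : Continuous fun ν : ℝ => Complex.exp (c * ν) := by fun_prop
  have hw : ∀ ν ∈ uIcc x y, HasDerivAt
      (fun ν : ℝ => c⁻¹ • Complex.exp (c * ν) • F ν - c⁻¹ ^ 2 • Complex.exp (c * ν) • F' ν)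
      (Complex.exp (c * ν) • F ν - c⁻¹ ^ 2 • Complex.exp (c * ν) • F'' ν) ν := by
    intro ν hν
    refine ((((he ν).smul (hF ν hν)).const_smul c⁻¹).sub
      (((he ν).smul (hF' ν hν)).const_smul (c⁻¹ ^ 2))).congr_deriv ?_
    match_scalars <;> field_simp
    ring
  have hint₁ : IntervalIntegrable (fun ν => Complex.exp (c * ν) • F ν) volume x y :=
    (hcont.continuousOn.smul (HasDerivAt.continuousOn hF)).intervalIntegrable
  have hint₂ : IntervalIntegrable (fun ν => c⁻¹ ^ 2 • Complex.exp (c * ν) • F'' ν) volume x y :=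
    ((hcont.continuousOn.smul hF'').const_smul _).intervalIntegrable
  have hftc := integral_eq_sub_of_hasDerivAt hw (hint₁.sub hint₂)
  rw [integral_sub hint₁ hint₂, intervalIntegral.integral_smul] at hftc
  rw [eq_add_of_sub_eq hftc]
  simp only [smul_sub]
  abel

theorem norm_cexp_neg_mul_I_smul [NormedSpace ℂ E] (t ν : ℝ) (v : E) :
    ‖Complex.exp (-(t * ν) * Complex.I) • v‖ = ‖v‖ := by
  rw [norm_smul, ← Complex.ofReal_mul, ← Complex.ofReal_neg, Complex.norm_exp_ofReal_mul_I,
    one_mul]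

theorem norm_integral_cexp_smul_le [NormedSpace ℂ E] [CompleteSpace E]
    {F F' F'' : ℝ → E} {t x y : ℝ} (ht : 0 < t) (hxy : x ≤ y)
    (hF : ∀ ν ∈ Icc x y, HasDerivAt F (F' ν) ν) (hF' : ∀ ν ∈ Icc x y, HasDerivAt F' (F'' ν) ν)
    (hF'' : ContinuousOn F'' (Icc x y)) :
    ‖∫ ν in x..y, Complex.exp (-(t * ν) * Complex.I) • F ν‖ ≤
      t⁻¹ * (‖F x‖ + ‖F y‖) + t⁻¹ ^ 2 * (‖F' x‖ + ‖F' y‖ + ∫ ν in x..y, ‖F'' ν‖) := by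
  set c : ℂ := -(t * Complex.I)
  have hphase : ∀ ν : ℝ, Complex.exp (-(t * ν) * Complex.I) = Complex.exp (c * ν) := fun ν => by
    congr 1; ring
  have he : ∀ (ν : ℝ) (v : E), ‖Complex.exp (c * ν) • v‖ = ‖v‖ := fun ν v => by
    rw [← hphase, norm_cexp_neg_mul_I_smul]
  have hc : ‖c⁻¹‖ = t⁻¹ := by simp [c, abs_of_pos ht]
  simp_rw [hphase]
  rw [← uIcc_of_le hxy] at hF hF' hF''
  rw [integral_cexp_mul_smul_eq (by simpa [c] using ht.ne') hF hF' hF'']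
  have hF''int : ‖∫ ν in x..y, Complex.exp (c * ν) • F'' ν‖ ≤ ∫ ν in x..y, ‖F'' ν‖ :=
    (intervalIntegral.norm_integral_le_integral_norm hxy).trans_eq (by simp only [he])
  calc _ ≤ ‖c⁻¹ • (Complex.exp (c * y) • F y - Complex.exp (c * x) • F x)‖
        + ‖c⁻¹ ^ 2 • (Complex.exp (c * y) • F' y - Complex.exp (c * x) • F' x)‖
        + ‖c⁻¹ ^ 2 • ∫ ν in x..y, Complex.exp (c * ν) • F'' ν‖ :=
        (norm_add_le _ _).trans (add_le_add_left (norm_sub_le _ _) _)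
    _ ≤ t⁻¹ * (‖F y‖ + ‖F x‖) + t⁻¹ ^ 2 * (‖F' y‖ + ‖F' x‖)
        + t⁻¹ ^ 2 * ∫ ν in x..y, ‖F'' ν‖ := by
        simp only [norm_smul, norm_pow, hc]
        gcongr
        · exact (norm_sub_le _ _).trans_eq (by rw [he, he])
        · exact (norm_sub_le _ _).trans_eq (by rw [he, he])
    _ = _ := by ring

theorem norm_integral_cexp_smul_le_of_split [NormedSpace ℂ E] [CompleteSpace E]
    {F F' F'' : ℝ → E} {t a b x y : ℝ} (ht : 0 < t)
    (hax : a ≤ x) (hxy : x ≤ y) (hyb : y ≤ b) (hFc : ContinuousOn F (Icc a b))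
    (hF : ∀ ν ∈ Icc x y, HasDerivAt F (F' ν) ν) (hF' : ∀ ν ∈ Icc x y, HasDerivAt F' (F'' ν) ν)
    (hF'' : ContinuousOn F'' (Icc x y)) :
    ‖∫ ν in a..b, Complex.exp (-(t * ν) * Complex.I) • F ν‖ ≤
      (∫ ν in a..x, ‖F ν‖) + (∫ ν in y..b, ‖F ν‖) +
        (t⁻¹ * (‖F x‖ + ‖F y‖) + t⁻¹ ^ 2 * (‖F' x‖ + ‖F' y‖ + ∫ ν in x..y, ‖F'' ν‖)) := by
  have hint : ∀ u ∈ Icc a b, ∀ v ∈ Icc a b,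
      IntervalIntegrable (fun ν => Complex.exp (-(t * ν) * Complex.I) • F ν) volume u v :=
    fun u hu v hv => ((by fun_prop : Continuous fun ν : ℝ =>
      Complex.exp (-(t * ν) * Complex.I)).continuousOn.smul
        (hFc.mono (uIcc_subset_Icc hu hv))).intervalIntegrable
  have ha : a ∈ Icc a b := left_mem_Icc.2 (hax.trans (hxy.trans hyb))
  have hb : b ∈ Icc a b := right_mem_Icc.2 (hax.trans (hxy.trans hyb))
  have hx : x ∈ Icc a b := ⟨hax, hxy.trans hyb⟩
  have hy : y ∈ Icc a b := ⟨hax.trans hxy, hyb⟩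
  have hedge : ∀ u v, u ≤ v →
      ‖∫ ν in u..v, Complex.exp (-(t * ν) * Complex.I) • F ν‖ ≤ ∫ ν in u..v, ‖F ν‖ :=
    fun u v huv => (intervalIntegral.norm_integral_le_integral_norm huv).trans_eq
      (by simp only [norm_cexp_neg_mul_I_smul])
  rw [← integral_add_adjacent_intervals (hint a ha x hx) (hint x hx b hb),
    ← integral_add_adjacent_intervals (hint x hx y hy) (hint y hy b hb)]
  calc _ ≤ ‖∫ ν in a..x, Complex.exp (-(t * ν) * Complex.I) • F ν‖
        + ‖∫ ν in y..b, Complex.exp (-(t * ν) * Complex.I) • F ν‖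
        + ‖∫ ν in x..y, Complex.exp (-(t * ν) * Complex.I) • F ν‖ := by
        refine (norm_add_le _ _).trans ?_
        linarith [norm_add_le (∫ ν in x..y, Complex.exp (-(t * ν) * Complex.I) • F ν)
          (∫ ν in y..b, Complex.exp (-(t * ν) * Complex.I) • F ν)]
    _ ≤ _ := add_le_add (add_le_add (hedge a x hax) (hedge y b hyb))
        (norm_integral_cexp_smul_le ht hxy hF hF' hF'')

theorem EndpointRpowBounds.norm_integral_cexp_smul_le [NormedSpace ℂ E] [CompleteSpace E]
    {F F' F'' : ℝ → E} {a b p q C t : ℝ}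
    (hB : EndpointRpowBounds F F' F'' a b p q C) (hp : 0 < p) (hq : 0 < q) (hqab : a + q ≤ b - q)
    (hFc : ContinuousOn F (Icc a b)) (hF : ∀ ν ∈ Ioo a b, HasDerivAt F (F' ν) ν)
    (hF' : ∀ ν ∈ Ioo a b, HasDerivAt F' (F'' ν) ν) (hF''c : ContinuousOn F'' (Ioo a b))
    (ht : 1 ≤ t) :
    ‖∫ ν in a..b, Complex.exp (-(t * ν) * Complex.I) • F ν‖ ≤
      (2 * C / (p + 1) * q ^ (p + 1) + 2 * C * q ^ p + 3 * C * q ^ (p - 1)) * t ^ (-(1 + p)) := by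
  have ht0 : 0 < t := by linarith
  set δ := q / t
  have hδ : δ ∈ Ioc 0 q := ⟨div_pos hq ht0, div_le_self hq.le ht⟩
  have hsub : Icc (a + δ) (b - δ) ⊆ Ioo a b := fun ν hν =>
    ⟨by linarith [hν.1, hδ.1], by linarith [hν.2, hδ.1]⟩
  have hIoo : ∀ s ∈ Ioo 0 δ, s ∈ Ioc 0 q := fun s hs => ⟨hs.1, hs.2.le.trans hδ.2⟩
  have hleft : ∫ ν in a..a + δ, ‖F ν‖ ≤ C * (δ ^ (p + 1) / (p + 1)) := by
    have := integral_norm_le_of_norm_le_rpow (f := fun s => F (a + s)) (by linarith) hδ.1.le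
      (hFc.comp (by fun_prop) fun s hs => ⟨by linarith [hs.1], by linarith [hs.2, hδ.2]⟩)
      fun s hs => hB.left s (hIoo s hs)
    rwa [intervalIntegral.integral_comp_add_left (fun ν => ‖F ν‖), add_zero] at this
  have hright : ∫ ν in b - δ..b, ‖F ν‖ ≤ C * (δ ^ (p + 1) / (p + 1)) := by
    have := integral_norm_le_of_norm_le_rpow (f := fun s => F (b - s)) (by linarith) hδ.1.le
      (hFc.comp (by fun_prop) fun s hs => ⟨by linarith [hs.2, hδ.2], by linarith [hs.1]⟩)
      fun s hs => hB.right s (hIoo s hs)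
    rwa [intervalIntegral.integral_comp_sub_left (fun ν => ‖F ν‖), sub_zero] at this
  have hscale : ∀ (n : ℕ) (r : ℝ), n + r = 1 + p → t⁻¹ ^ n * δ ^ r = q ^ r * t ^ (-(1 + p)) :=
    fun n r h => by rw [inv_pow_mul_div_rpow hq.le ht0, h]
  calc _ ≤ _ := norm_integral_cexp_smul_le_of_split ht0 (by linarith [hδ.1])
        (by linarith [hδ.2]) (by linarith [hδ.1]) hFc (fun ν hν => hF ν (hsub hν))
        (fun ν hν => hF' ν (hsub hν)) (hF''c.mono hsub)
    _ ≤ C * (δ ^ (p + 1) / (p + 1)) + C * (δ ^ (p + 1) / (p + 1)) +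
          (t⁻¹ * (C * δ ^ p + C * δ ^ p) +
            t⁻¹ ^ 2 * (C * δ ^ (p - 1) + C * δ ^ (p - 1) + C * δ ^ (p - 1))) := by
        gcongr
        exacts [hB.left δ hδ, hB.right δ hδ, hB.deriv_left δ hδ, hB.deriv_right δ hδ,
          hB.integral_second_deriv δ hδ]
    _ = _ := by
        linear_combination (2 * C / (p + 1)) * hscale 0 (p + 1) (by push_cast; ring)
          + 2 * C * hscale 1 p (by push_cast; ring) + 3 * C * hscale 2 (p - 1) (by push_cast; ring)

end

theorem zygmund_oscillatory_decay_general {B : Type*} [NormedAddCommGroup B]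
    [NormedSpace ℂ B] [CompleteSpace B]
    (a b : ℝ) (hab : a < b) (F : ℝ → B) (p : ℝ) (hp : p ∈ Set.Ioo (0:ℝ) 1)
    (hcont : ContinuousOn F (Set.Icc a b))
    (hF : ContDiffOn ℝ 2 F (Set.Ioo a b))
    (hFa : F a = 0) (hFb : F b = 0)
    (hEdge : ∃ K : ℝ, ∀ ζ ∈ Set.Ioo (0:ℝ) ((b - a) / 2),
        ‖iteratedDeriv 2 F (a + ζ)‖ ≤ K * ζ ^ (p - 2) ∧
        ‖iteratedDeriv 2 F (b - ζ)‖ ≤ K * ζ ^ (p - 2)) :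
    ∃ M : ℝ, ∀ t ≥ (1:ℝ),
      ‖∫ ν in a..b, Complex.exp (-(t * ν) * Complex.I) • F ν‖ ≤ M * t ^ (-(1 + p)) := by
  obtain ⟨K, hK⟩ := hEdge
  have hF₁ : ∀ ν ∈ Ioo a b, HasDerivAt F (deriv F ν) ν := fun ν hν =>
    ((hF.differentiableOn (by norm_num)).differentiableAt (isOpen_Ioo.mem_nhds hν)).hasDerivAt
  have hF' : ContDiffOn ℝ 1 (deriv F) (Ioo a b) := hF.deriv_of_isOpen isOpen_Ioo (by norm_num)
  have h2 : iteratedDeriv 2 F = deriv (deriv F) := by rw [iteratedDeriv_succ, iteratedDeriv_one]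
  have hF₂ : ∀ ν ∈ Ioo a b, HasDerivAt (deriv F) (iteratedDeriv 2 F ν) ν := fun ν hν =>
    h2 ▸ ((hF'.differentiableOn one_ne_zero).differentiableAt (isOpen_Ioo.mem_nhds hν)).hasDerivAt
  have hF₂c : ContinuousOn (iteratedDeriv 2 F) (Ioo a b) :=
    h2 ▸ hF'.continuousOn_deriv_of_isOpen isOpen_Ioo le_rfl
  have hq : 0 < (b - a) / 4 := by linarith
  obtain ⟨C, hC⟩ := exists_endpointRpowBounds hp hq (by linarith) hcont hFa hFb hF₁ hF₂ hF₂c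
    fun s hs => hK s ⟨hs.1, by linarith [hs.2]⟩
  exact ⟨_, fun t ht => hC.norm_integral_cexp_smul_le hp.1 hq (by linarith) hcont hF₁ hF₂ hF₂c ht⟩

/-- Zygmund-type oscillatory integral lemma (Jensen–Kato): if F : [a,b] → B
vanishes at the endpoints, is C² inside, F'' is integrable away from the
endpoints, and ‖F''‖ = O(ζ^{p-2}) at distance ζ from the endpoints for some
p ∈ (0,1), then ∫_a^b e^{-itν}F(ν)dν = O(t^{-1-p}) as t → ∞. -/
theorem zygmund_oscillatory_decay {B : Type*} [NormedAddCommGroup B]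
    [NormedSpace ℂ B] [CompleteSpace B]
    (a b : ℝ) (hab : a < b) (F : ℝ → B) (p : ℝ) (hp : p ∈ Set.Ioo (0:ℝ) 1)
    (hcont : ContinuousOn F (Set.Icc a b))
    (hF : ContDiffOn ℝ 2 F (Set.Ioo a b))
    (hFa : F a = 0) (hFb : F b = 0)
    (hInt : ∀ δ > (0:ℝ),
        MeasureTheory.IntegrableOn (iteratedDeriv 2 F) (Set.Icc (a + δ) (b - δ)))
    (hEdge : ∃ K : ℝ, ∀ ζ ∈ Set.Ioo (0:ℝ) ((b - a) / 2),
        ‖iteratedDeriv 2 F (a + ζ)‖ ≤ K * ζ ^ (p - 2) ∧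
        ‖iteratedDeriv 2 F (b - ζ)‖ ≤ K * ζ ^ (p - 2)) :
    ∃ M : ℝ, ∀ t ≥ (1:ℝ),
      ‖∫ ν in a..b, Complex.exp (-(t * ν) * Complex.I) • F ν‖ ≤ M * t ^ (-(1 + p)) :=
  zygmund_oscillatory_decay_general a b hab F p hp hcont hF hFa hFb hEdge
end

section
/- Suppose α = 0 (i.e., b = -2a) in the determinant equation α² + 2iα(sin θ₊ + sin θ₋) - 4 sin θ₊ sin θ₋ - β² = 0 with β = b/2 = -a and a ≠ 0. Then the equation reduces to sin θ₊ sin θ₋ = -a²/4, and using sin²θ₊ sin²θ₋ = (−a²/4 + λ²/4)² + λ² + a²λ²/4 (valid when (ω+2)² = 4 + a²), the only solutions satisfy λ²(λ² + 2a² + 16) = 0. -/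
/-- For α = 0 (b = -2a, β = -a, a ≠ 0) the determinant equation reduces to
sin θ₊ sin θ₋ = -a²/4, and with sin²θ₊ sin²θ₋ computed from the dispersion
relations and (ω+2)² = 4 + a², the only solutions satisfy
λ²(λ² + 2a² + 16) = 0. -/
theorem det_alpha_zero_roots (a ω : ℝ) (ha : a ≠ 0)
    (hωa : (ω + 2) ^ 2 = 4 + a ^ 2)
    (lam sp sm : ℂ)
    (hsp : sp ^ 2 = 1 - (((ω : ℂ) + 2 + Complex.I * lam) / 2) ^ 2)
    (hsm : sm ^ 2 = 1 - (((ω : ℂ) + 2 - Complex.I * lam) / 2) ^ 2)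
    (heq : -4 * sp * sm - (a : ℂ) ^ 2 = 0) :
    sp * sm = -(a : ℂ) ^ 2 / 4 ∧ lam ^ 2 * (lam ^ 2 + 2 * (a : ℂ) ^ 2 + 16) = 0 := by
  have h1 : sp * sm = -(a : ℂ) ^ 2 / 4 := by linear_combination -heq / 4
  have hW : ((ω : ℂ) + 2) ^ 2 = 4 + (a : ℂ) ^ 2 := by exact_mod_cast hωa
  have hI : Complex.I ^ 2 = -1 := Complex.I_sq
  have hprod : (sp * sm) ^ 2 =
      (1 - (((ω : ℂ) + 2 + Complex.I * lam) / 2) ^ 2) *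
      (1 - (((ω : ℂ) + 2 - Complex.I * lam) / 2) ^ 2) := by
    rw [mul_pow, hsp, hsm]
  refine ⟨h1, ?_⟩
  linear_combination (-16 : ℂ) * hprod + 16 * (sp * sm - (a : ℂ) ^ 2 / 4) * h1 +
    (lam ^ 4 * (1 - Complex.I ^ 2) + lam ^ 2 * (8 + 2 * ((ω : ℂ) + 2) ^ 2)) * hI +
    (-2 * lam ^ 2 - (((ω : ℂ) + 2) ^ 2 - 4 + (a : ℂ) ^ 2)) * hW
end
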